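/- arXiv:math/9806093 — 4 statements merged into one kernel-verified Lean document; each statement's English description precedes it below -/
import Mathlib

section
/- Let H be a Hilbert space, Λ a set, and P : F_Λ⁺ → B(H) a map such that each P_s is a self-adjoint projection, P_e = 1, and for all s, t ∈ F_Λ⁺: P_s P_t = P_t if s ≤ t, P_s P_t = P_s if t ≤ s, and P_s P_t = 0 if s and t are not comparable. Then for every finite subset F of F_Λ⁺ containing e, setting Q^F_s := P_s ∏_{t ∈ F, s < t} (1 − P_t) for s ∈ F (the factors commute, so the product is well defined), one has Σ_{s ∈ F} Q^F_s = 1. -/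
/-- Let `H` be a Hilbert space and `P : F_Λ⁺ → B(H)` a family of self-adjoint projections
with `P_e = 1`, satisfying `P_s P_t = P_t` if `s ≤ t` (prefix order), `P_s P_t = P_s` if
`t ≤ s`, and `P_s P_t = 0` if `s, t` are incomparable.  Then for every finite `F ⊆ F_Λ⁺`
containing `e`, with `Q^F_s := P_s ∏_{t ∈ F, s < t} (1 - P_t)` (the factors commute so the
product, here taken along any enumeration of `{t ∈ F | s < t}`, is well defined), one has
`∑_{s ∈ F} Q^F_s = 1`. -/
theorem sum_QF_eq_one
    {Λ : Type*} {H : Type*} [NormedAddCommGroup H] [InnerProductSpace ℂ H] [CompleteSpace H]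
    (P : FreeMonoid Λ → (H →L[ℂ] H))
    (hsa : ∀ s, IsSelfAdjoint (P s)) (hidem : ∀ s, IsIdempotentElem (P s))
    (hone : P 1 = 1)
    (hle : ∀ s t : FreeMonoid Λ, (∃ r, t = s * r) → P s * P t = P t)
    (hge : ∀ s t : FreeMonoid Λ, (∃ r, s = t * r) → P s * P t = P s)
    (hinc : ∀ s t : FreeMonoid Λ, ¬(∃ r, t = s * r) → ¬(∃ r, s = t * r) → P s * P t = 0)
    (F : Finset (FreeMonoid Λ)) (heF : (1 : FreeMonoid Λ) ∈ F)
    (Q : FreeMonoid Λ → (H →L[ℂ] H))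
    (hQ : ∀ s ∈ F, ∃ l : List (FreeMonoid Λ), l.Nodup ∧
        (∀ t : FreeMonoid Λ, t ∈ l ↔ (t ∈ F ∧ (∃ r, t = s * r) ∧ t ≠ s)) ∧
        Q s = P s * (l.map (fun t => 1 - P t)).prod) :
    ∑ s ∈ F, Q s = 1 := by
  classical
  -- all the projections commute with one another
  have hcommP : ∀ s t, Commute (P s) (P t) := by
    intro s t
    by_cases h1 : ∃ r, t = s * r
    · show P s * P t = P t * P s
      rw [hle s t h1, hge t s h1]
    · by_cases h2 : ∃ r, s = t * r
      · show P s * P t = P t * P s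
        rw [hge s t h2, hle t s h2]
      · show P s * P t = P t * P s
        rw [hinc s t h1 h2, hinc t s h2 h1]
  have hcommf : ∀ s t, Commute (P s) ((fun t => 1 - P t) t) := fun s t =>
    (Commute.one_right (P s)).sub_right (hcommP s t)
  have hcommff : ∀ s t, Commute ((fun t => 1 - P t) s) ((fun t => 1 - P t) t) := fun s t =>
    (Commute.one_right _).sub_right ((Commute.one_left (P t)).sub_left (hcommP s t))
  have hcommPl : ∀ s (l : List (FreeMonoid Λ)),
      Commute (P s) ((l.map (fun t => 1 - P t)).prod) := by
    intro s l
    refine Commute.list_prod_right _ _ ?_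
    intro x hx
    rcases List.mem_map.1 hx with ⟨u, _, rfl⟩
    exact hcommf s u
  have hcommfl : ∀ s (l : List (FreeMonoid Λ)),
      Commute ((fun t => 1 - P t) s) ((l.map (fun t => 1 - P t)).prod) := by
    intro s l
    refine Commute.list_prod_right _ _ ?_
    intro x hx
    rcases List.mem_map.1 hx with ⟨u, _, rfl⟩
    exact hcommff s u
  -- pulling one factor out of the product
  have hprod_erase : ∀ (l : List (FreeMonoid Λ)) (m : FreeMonoid Λ), m ∈ l →
      (l.map (fun t => 1 - P t)).prod
        = ((l.erase m).map (fun t => 1 - P t)).prod * (1 - P m) := by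
    intro l
    induction l with
    | nil => intro m hm; cases hm
    | cons a t ih =>
      intro m hm
      by_cases hax : a = m
      · subst hax
        rw [List.erase_cons_head, List.map_cons, List.prod_cons]
        exact hcommfl a t
      · have hm' : m ∈ t := by
          rcases List.mem_cons.1 hm with h | h
          · exact absurd h.symm hax
          · exact h
        rw [List.erase_cons_tail (by simpa using hax), List.map_cons, List.map_cons,
          List.prod_cons, List.prod_cons, ih m hm', mul_assoc]
  -- main induction
  have key : ∀ n (F : Finset (FreeMonoid Λ)), F.card = n → (1 : FreeMonoid Λ) ∈ F →
      ∀ Q : FreeMonoid Λ → (H →L[ℂ] H),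
      (∀ s ∈ F, ∃ l : List (FreeMonoid Λ), l.Nodup ∧
        (∀ t : FreeMonoid Λ, t ∈ l ↔ (t ∈ F ∧ (∃ r, t = s * r) ∧ t ≠ s)) ∧
        Q s = P s * (l.map (fun t => 1 - P t)).prod) →
      ∑ s ∈ F, Q s = 1 := by
    intro n
    induction n using Nat.strong_induction_on with
    | _ n ih =>
      intro F hcard h1F Q hQ
      by_cases hF : F.erase 1 = ∅
      · have hFsing : F = {1} := by
          rcases (Finset.erase_eq_empty_iff F 1).1 hF with h | h
          · exact absurd (h ▸ h1F) (Finset.notMem_empty 1)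
          · exact h
        subst hFsing
        rw [Finset.sum_singleton]
        obtain ⟨l, hnd, hmem, hQ1⟩ := hQ 1 h1F
        have hl : l = [] := by
          refine List.eq_nil_iff_forall_not_mem.2 fun t ht => ?_
          obtain ⟨htF, _, hne⟩ := (hmem t).1 ht
          exact hne (Finset.mem_singleton.1 htF)
        rw [hl] at hQ1
        simpa [hone] using hQ1
      · obtain ⟨m, hmF', hmax⟩ := Finset.exists_max_image (F.erase 1)
          (fun w => w.length) (Finset.nonempty_of_ne_empty hF)
        have hmF : m ∈ F := Finset.mem_of_mem_erase hmF'
        have hm1 : m ≠ 1 := (Finset.mem_erase.1 hmF').1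
        -- m is maximal in F for the prefix order
        have hmax' : ∀ t ∈ F, (∃ r, t = m * r) → t = m := by
          rintro t htF ⟨r, rfl⟩
          by_cases hr1 : r = 1
          · rw [hr1, mul_one]
          · exfalso
            have ht1 : m * r ≠ 1 := by
              intro h
              have := congrArg FreeMonoid.length h
              simp only [FreeMonoid.length_mul, FreeMonoid.length_one] at this
              exact hr1 (FreeMonoid.length_eq_zero.1 (by omega))
            have := hmax (m * r) (Finset.mem_erase.2 ⟨ht1, htF⟩)
            simp only [FreeMonoid.length_mul] at this
            have hr0 : r.length = 0 := by omega
            exact hr1 (FreeMonoid.length_eq_zero.1 hr0)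
        -- the chosen lists
        set L : FreeMonoid Λ → List (FreeMonoid Λ) :=
          fun s => if h : s ∈ F then Classical.choose (hQ s h) else [] with hLdef
        have hL : ∀ s (h : s ∈ F), (L s).Nodup ∧
            (∀ t : FreeMonoid Λ, t ∈ L s ↔ (t ∈ F ∧ (∃ r, t = s * r) ∧ t ≠ s)) ∧
            Q s = P s * ((L s).map (fun t => 1 - P t)).prod := by
          intro s h
          simp only [hLdef, dif_pos h]
          exact Classical.choose_spec (hQ s h)
        -- Q m = P m
        have hQm : Q m = P m := by
          obtain ⟨hnd, hmem, hQm⟩ := hL m hmF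
          have hLm : L m = [] := by
            refine List.eq_nil_iff_forall_not_mem.2 fun t ht => ?_
            obtain ⟨htF, hr, hne⟩ := (hmem t).1 ht
            exact hne (hmax' t htF hr)
          rw [hLm] at hQm
          simpa using hQm
        -- the new family for F.erase m
        set Q' : FreeMonoid Λ → (H →L[ℂ] H) :=
          fun s => P s * (((L s).erase m).map (fun t => 1 - P t)).prod with hQ'def
        have hQ'spec : ∀ s ∈ F.erase m, ∃ l : List (FreeMonoid Λ), l.Nodup ∧
            (∀ t : FreeMonoid Λ, t ∈ l ↔ (t ∈ F.erase m ∧ (∃ r, t = s * r) ∧ t ≠ s)) ∧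
            Q' s = P s * (l.map (fun t => 1 - P t)).prod := by
          intro s hs
          obtain ⟨hnd, hmem, _⟩ := hL s (Finset.mem_of_mem_erase hs)
          refine ⟨(L s).erase m, hnd.erase m, fun t => ?_, rfl⟩
          rw [hnd.mem_erase_iff, hmem t, Finset.mem_erase]
          tauto
        -- apply the induction hypothesis
        have hn1 : (F.erase m).card = n - 1 := by
          rw [Finset.card_erase_of_mem hmF, hcard]
        have hnpos : 0 < n := by
          rw [← hcard]
          exact Finset.card_pos.2 ⟨1, h1F⟩
        have h1F' : (1 : FreeMonoid Λ) ∈ F.erase m :=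
          Finset.mem_erase.2 ⟨Ne.symm hm1, h1F⟩
        have hsum' : ∑ s ∈ F.erase m, Q' s = 1 :=
          ih (n - 1) (by omega) (F.erase m) hn1 h1F' Q' hQ'spec
        -- relate Q and Q' on F.erase m
        have hrel : ∀ s ∈ F.erase m, Q s = Q' s * (1 - P m) := by
          intro s hs
          have hsF : s ∈ F := Finset.mem_of_mem_erase hs
          have hsm : s ≠ m := (Finset.mem_erase.1 hs).1
          obtain ⟨hnd, hmem, hQs⟩ := hL s hsF
          by_cases hm : m ∈ L s
          · rw [hQs, hprod_erase (L s) m hm, ← mul_assoc]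
          · have herase : (L s).erase m = L s := List.erase_of_not_mem hm
            have hno : ¬ ∃ r, m = s * r := by
              intro hr
              exact hm ((hmem m).2 ⟨hmF, hr, Ne.symm hsm⟩)
            have hno' : ¬ ∃ r, s = m * r := by
              rintro hr
              exact hsm (hmax' s hsF hr)
            have hzero : P s * P m = 0 := hinc s m hno hno'
            have hQ'Pm : Q' s * P m = 0 := by
              rw [hQ'def]
              simp only
              rw [herase, mul_assoc, ← (hcommPl m (L s)).eq, ← mul_assoc, hzero, zero_mul]
            rw [mul_sub, mul_one, hQ'Pm, sub_zero, hQs, hQ'def]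
            simp only
            rw [herase]
        -- put it all together
        calc ∑ s ∈ F, Q s = ∑ s ∈ F.erase m, Q s + Q m :=
              (Finset.sum_erase_add F Q hmF).symm
          _ = ∑ s ∈ F.erase m, Q' s * (1 - P m) + P m := by
              rw [Finset.sum_congr rfl hrel, hQm]
          _ = (∑ s ∈ F.erase m, Q' s) * (1 - P m) + P m := by
              rw [Finset.sum_mul]
          _ = 1 := by rw [hsum', one_mul, sub_add_cancel]
  exact key F.card F rfl heF Q hQ
end

section
/- Let {S_f, P_v} be a Toeplitz–Cuntz–Krieger E-family on a Hilbert space H. Then C*(S,P), the smallest norm-closed *-subalgebra of B(H) containing all the S_f and P_v, equals the closed linear span of the set {S_μ S_ν* : μ, ν paths in E (including trivial paths)}. -/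
/-- `IsPathFrom r s v l` : the list of edges `l` is a (possibly empty) path starting at the
vertex `v`: consecutive edges are composable, and the first edge (if any) has source `v`.
The empty list represents the trivial path at `v`. -/
def IsPathFrom {V Ed : Type*} (r s : Ed → V) (v : V) (l : List Ed) : Prop :=
  l.Chain' (fun e f => r e = s f) ∧ ∀ e ∈ l.head?, s e = v

/-- The range vertex of the path `(v, l)`: `v` if `l` is empty, and the range of the last
edge otherwise. -/
def pathEnd {V Ed : Type*} (r : Ed → V) (v : V) (l : List Ed) : V :=
  (l.getLast?).elim v r

/-- `S_μ` for the path `μ = (v, l)` : the product `S_{f₁} ⋯ S_{f_n}` of the edge operators,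
and `P_v` for the trivial path at `v`. -/
def sPath {V Ed α : Type*} [Monoid α] (P : V → α) (S : Ed → α) (v : V) (l : List Ed) : α :=
  match l with
  | [] => P v
  | l => (l.map S).prod

/-- A Toeplitz–Cuntz–Krieger `E`-family on a Hilbert space `H`, for the directed graph with
vertices `V`, edges `Ed` and range and source maps `r s : Ed → V`. -/
def IsTCKFamily {V Ed : Type*} {H : Type*} [NormedAddCommGroup H] [InnerProductSpace ℂ H]
    [CompleteSpace H] (r s : Ed → V) (P : V → (H →L[ℂ] H)) (S : Ed → (H →L[ℂ] H)) : Prop :=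
  (∀ v, IsSelfAdjoint (P v)) ∧ (∀ v, IsIdempotentElem (P v)) ∧
  (∀ v w, v ≠ w → P v * P w = 0) ∧
  (∀ f, star (S f) * S f = P (r f)) ∧
  (∀ e f, e ≠ f → (S e * star (S e)) * (S f * star (S f)) = 0) ∧
  (∀ (v : V) (F : Finset Ed), (∀ f ∈ F, s f = v) → (∑ f ∈ F, S f * star (S f)) ≤ P v)

/-!
The set `M` of monomials `S_μ S_ν^*` contains the generators (`S_f = S_f P_{r f}^*`,
`P_v = P_v P_v^*`), lies in the *-algebra they generate, and `M ∪ {0}` is closed under adjoints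
and products. So the span of `M` already equals that *-algebra, before taking closures.
Closure under products reduces to left multiplication by `P_u`, `S_f` and `S_f^*`, which the
relations compute: `P_u S_μ = δ_{u, s(μ)} S_μ`, `S_f S_μ ∈ {S_{fμ}, 0}`,
`S_f^* S_{eμ} = δ_{f e} S_μ` and `S_f^* P_v S_ν^* = δ_{v, s f} (S_ν S_f)^*`.
The one analytic input is that a projection dominated by `P_{s f}` is absorbed by it, which gives
`P_{s f} S_f = S_f`.
-/

open Submodule in
theorem NonUnitalStarAlgebra.coe_adjoin_eq_span_of_mul_mem_of_star_mem {R A : Type*}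
    [CommSemiring R] [StarRing R] [Semiring A] [StarRing A] [Algebra R A] [StarModule R A]
    {s M : Set A} (hs : s ⊆ span R M) (hM : M ⊆ adjoin R s)
    (hmul : ∀ x ∈ M, ∀ y ∈ M, x * y ∈ span R M)
    (hstar : ∀ x ∈ M, star x ∈ span R M) :
    (adjoin R s : Set A) = span R M := by
  have span_mul_mem : ∀ x y, x ∈ span R M → y ∈ span R M → x * y ∈ span R M := by
    intro x y hx hy
    have hxy := mul_mem_mul hx hy
    rw [span_mul_span] at hxy
    exact span_le.2 (Set.mul_subset_iff.2 hmul) hxy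
  have span_star_mem : ∀ x ∈ span R M, star x ∈ span R M := fun x hx => by
    induction hx using span_induction with
    | mem y hy => exact hstar y hy
    | zero => simp
    | add y z _ _ hy hz => rw [star_add]; exact add_mem hy hz
    | smul c y _ hy => rw [star_smul]; exact smul_mem _ _ hy
  let B : NonUnitalStarSubalgebra R A :=
    ((span R M).toNonUnitalSubalgebra span_mul_mem).toNonUnitalStarSubalgebra span_star_mem
  exact subset_antisymm (adjoin_le (S := B) hs) (span_le.2 hM)

theorem mul_star_mul_eq_self_of_isIdempotentElem_star_mul {A : Type*} [NonUnitalNormedRing A]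
    [StarRing A] [CStarRing A] {a : A} (h : IsIdempotentElem (star a * a)) :
    a * star a * a = a := by
  have h0 : star (a * star a * a - a) * (a * star a * a - a) = 0 := by
    calc star (a * star a * a - a) * (a * star a * a - a)
        = star a * a * (star a * a) * (star a * a) - star a * a * (star a * a)
            - star a * a * (star a * a) + star a * a := by
          simp only [star_sub, star_mul, star_star]; noncomm_ring
      _ = 0 := by rw [h.eq, h.eq]; abel
  rw [← sub_eq_zero]
  exact CStarRing.star_mul_self_eq_zero_iff _ |>.1 h0

section Paths

variable {V Ed : Type*} {r s : Ed → V}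

lemma pathEnd_cons (v : V) (e : Ed) (l : List Ed) :
    pathEnd r v (e :: l) = pathEnd r (r e) l := by
  cases l <;> simp [pathEnd, List.getLast?_cons]

lemma isPathFrom_nil (v : V) : IsPathFrom r s v ([] : List Ed) :=
  ⟨List.isChain_nil, by simp⟩

lemma isPathFrom_cons_iff {v : V} {e : Ed} {l : List Ed} :
    IsPathFrom r s v (e :: l) ↔ s e = v ∧ IsPathFrom r s (r e) l := by
  constructor
  · rintro ⟨hchain, hhead⟩
    obtain ⟨hlink, htail⟩ := List.isChain_cons.mp hchain
    exact ⟨hhead e rfl, htail, fun g hg => (hlink g hg).symm⟩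
  · rintro ⟨hv, htail, hhead⟩
    refine ⟨List.isChain_cons.mpr ⟨fun g hg => (hhead g hg).symm, htail⟩, ?_⟩
    rintro g ⟨⟩
    exact hv

lemma IsPathFrom.append_singleton {w : V} {l : List Ed} {f : Ed} (hl : IsPathFrom r s w l)
    (hf : pathEnd r w l = s f) : IsPathFrom r s w (l ++ [f]) := by
  induction l generalizing w with
  | nil => exact ⟨List.isChain_singleton f, by simp [← hf, pathEnd]⟩
  | cons e t ih =>
    obtain ⟨hv, ht⟩ := isPathFrom_cons_iff.mp hl
    rw [pathEnd_cons] at hf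
    exact isPathFrom_cons_iff.mpr ⟨hv, ih ht hf⟩

end Paths

def pathMonomials {V Ed α : Type*} [Monoid α] [Star α] (r s : Ed → V) (P : V → α)
    (S : Ed → α) : Set α :=
  {T | ∃ (v : V) (lμ : List Ed) (w : V) (lν : List Ed),
    IsPathFrom r s v lμ ∧ IsPathFrom r s w lν ∧ T = sPath P S v lμ * star (sPath P S w lν)}

lemma star_mem_pathMonomials {V Ed α : Type*} [Monoid α] [StarMul α] {r s : Ed → V}
    {P : V → α} {S : Ed → α} {T : α} (hT : T ∈ pathMonomials r s P S) :
    star T ∈ pathMonomials r s P S := by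
  obtain ⟨v, lμ, w, lν, hμ, hν, rfl⟩ := hT
  exact ⟨w, lν, v, lμ, hν, hμ, by rw [star_mul, star_star]⟩

namespace IsTCKFamily

variable {V Ed H : Type*} [NormedAddCommGroup H] [InnerProductSpace ℂ H] [CompleteSpace H]
  {r s : Ed → V} {P : V → (H →L[ℂ] H)} {S : Ed → (H →L[ℂ] H)}

lemma isStarProjection_P (hSP : IsTCKFamily r s P S) (v : V) : IsStarProjection (P v) :=
  ⟨hSP.2.1 v, hSP.1 v⟩

lemma P_mul_P_of_ne (hSP : IsTCKFamily r s P S) {u v : V} (h : u ≠ v) : P u * P v = 0 :=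
  hSP.2.2.1 u v h

lemma star_S_mul_S (hSP : IsTCKFamily r s P S) (f : Ed) : star (S f) * S f = P (r f) :=
  hSP.2.2.2.1 f

lemma S_mul_star_S_mul_S (hSP : IsTCKFamily r s P S) (f : Ed) :
    S f * star (S f) * S f = S f :=
  mul_star_mul_eq_self_of_isIdempotentElem_star_mul <| by
    rw [hSP.star_S_mul_S]; exact (hSP.isStarProjection_P _).isIdempotentElem

lemma isStarProjection_S_mul_star_S (hSP : IsTCKFamily r s P S) (f : Ed) :
    IsStarProjection (S f * star (S f)) where
  isIdempotentElem := by rw [IsIdempotentElem, ← mul_assoc, hSP.S_mul_star_S_mul_S]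
  isSelfAdjoint := by rw [IsSelfAdjoint, star_mul, star_star]

lemma S_mul_P_range (hSP : IsTCKFamily r s P S) (f : Ed) : S f * P (r f) = S f := by
  rw [← hSP.star_S_mul_S, ← mul_assoc, hSP.S_mul_star_S_mul_S]

lemma P_source_mul_S (hSP : IsTCKFamily r s P S) (f : Ed) : P (s f) * S f = S f := by
  have hle : S f * star (S f) ≤ P (s f) := by simpa using hSP.2.2.2.2.2 (s f) {f} (by simp)
  have habsorb : P (s f) * (S f * star (S f)) = S f * star (S f) :=
    (hSP.isStarProjection_S_mul_star_S f).le_iff_mul_eq_right (hSP.isStarProjection_P _) |>.1 hle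
  calc P (s f) * S f = P (s f) * (S f * star (S f)) * S f := by
        rw [mul_assoc, hSP.S_mul_star_S_mul_S]
    _ = S f := by rw [habsorb, hSP.S_mul_star_S_mul_S]

lemma star_S_mul_S_of_ne (hSP : IsTCKFamily r s P S) {e f : Ed} (h : e ≠ f) :
    star (S e) * S f = 0 :=
  calc star (S e) * S f = star (S e * star (S e) * S e) * (S f * star (S f) * S f) := by
        rw [hSP.S_mul_star_S_mul_S, hSP.S_mul_star_S_mul_S]
    _ = star (S e) * ((S e * star (S e)) * (S f * star (S f))) * S f := by
        simp only [star_mul, star_star, mul_assoc]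
    _ = 0 := by rw [hSP.2.2.2.2.1 e f h, mul_zero, zero_mul]

lemma P_mul_eq_zero_of_ne (hSP : IsTCKFamily r s P S) {X : H →L[ℂ] H} {u v : V}
    (hX : P v * X = X) (h : u ≠ v) : P u * X = 0 := by
  rw [← hX, ← mul_assoc, hSP.P_mul_P_of_ne h, zero_mul]

lemma mul_P_eq_zero_of_ne (hSP : IsTCKFamily r s P S) {X : H →L[ℂ] H} {u v : V}
    (hX : X * P v = X) (h : u ≠ v) : X * P u = 0 := by
  rw [← hX, mul_assoc, hSP.P_mul_P_of_ne h.symm, mul_zero]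

lemma sPath_cons (hSP : IsTCKFamily r s P S) (v : V) (e : Ed) (l : List Ed) :
    sPath P S v (e :: l) = S e * sPath P S (r e) l := by
  cases l with
  | nil => simp [sPath, hSP.S_mul_P_range]
  | cons g t => simp [sPath]

lemma P_mul_sPath (hSP : IsTCKFamily r s P S) {v : V} {l : List Ed}
    (hl : IsPathFrom r s v l) : P v * sPath P S v l = sPath P S v l := by
  cases l with
  | nil => exact (hSP.isStarProjection_P v).isIdempotentElem
  | cons e t =>
    obtain ⟨hv, -⟩ := isPathFrom_cons_iff.mp hl
    rw [hSP.sPath_cons, ← mul_assoc, ← hv, hSP.P_source_mul_S]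

lemma sPath_mul_P_pathEnd (hSP : IsTCKFamily r s P S) (v : V) (l : List Ed) :
    sPath P S v l * P (pathEnd r v l) = sPath P S v l := by
  induction l generalizing v with
  | nil => exact (hSP.isStarProjection_P v).isIdempotentElem
  | cons e t ih => rw [hSP.sPath_cons, pathEnd_cons, mul_assoc, ih]

lemma sPath_mul_S (hSP : IsTCKFamily r s P S) {w : V} {l : List Ed} {f : Ed}
    (hf : pathEnd r w l = s f) : sPath P S w l * S f = sPath P S w (l ++ [f]) := by
  induction l generalizing w with
  | nil =>
    obtain rfl : w = s f := hf
    simpa [sPath] using hSP.P_source_mul_S f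
  | cons e t ih =>
    rw [pathEnd_cons] at hf
    rw [hSP.sPath_cons, mul_assoc, ih hf, List.cons_append, hSP.sPath_cons]

lemma sPath_mul_S_of_ne (hSP : IsTCKFamily r s P S) {w : V} {l : List Ed} {f : Ed}
    (hf : pathEnd r w l ≠ s f) : sPath P S w l * S f = 0 := by
  rw [← hSP.sPath_mul_P_pathEnd, mul_assoc,
    hSP.P_mul_eq_zero_of_ne (hSP.P_source_mul_S f) hf, mul_zero]

lemma P_mul_mem (hSP : IsTCKFamily r s P S) (u : V) {T : H →L[ℂ] H}
    (hT : T ∈ insert 0 (pathMonomials r s P S)) :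
    P u * T ∈ insert 0 (pathMonomials r s P S) := by
  rcases hT with rfl | ⟨v, lμ, w, lν, hμ, hν, rfl⟩
  · exact .inl (mul_zero _)
  by_cases huv : u = v
  · subst huv
    exact .inr ⟨u, lμ, w, lν, hμ, hν, by rw [← mul_assoc, hSP.P_mul_sPath hμ]⟩
  · left
    rw [← mul_assoc, hSP.P_mul_eq_zero_of_ne (hSP.P_mul_sPath hμ) huv, zero_mul]

lemma S_mul_mem (hSP : IsTCKFamily r s P S) (f : Ed) {T : H →L[ℂ] H}
    (hT : T ∈ insert 0 (pathMonomials r s P S)) :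
    S f * T ∈ insert 0 (pathMonomials r s P S) := by
  rcases hT with rfl | ⟨v, lμ, w, lν, hμ, hν, rfl⟩
  · exact .inl (mul_zero _)
  by_cases hv : v = r f
  · subst hv
    exact .inr ⟨s f, f :: lμ, w, lν, isPathFrom_cons_iff.mpr ⟨rfl, hμ⟩, hν,
      by rw [hSP.sPath_cons, mul_assoc]⟩
  · left
    rw [← hSP.P_mul_sPath hμ, ← mul_assoc, ← mul_assoc,
      hSP.mul_P_eq_zero_of_ne (hSP.S_mul_P_range f) hv, zero_mul, zero_mul]

lemma star_S_mul_star_sPath_mem (hSP : IsTCKFamily r s P S) (f : Ed) {w : V} {l : List Ed}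
    (hl : IsPathFrom r s w l) :
    star (S f) * star (sPath P S w l) ∈ insert 0 (pathMonomials r s P S) := by
  rw [← star_mul]
  by_cases hf : pathEnd r w l = s f
  · have hlf := hl.append_singleton hf
    refine .inr ⟨pathEnd r w (l ++ [f]), [], w, l ++ [f], isPathFrom_nil _, hlf, ?_⟩
    rw [hSP.sPath_mul_S hf]
    conv_lhs => rw [← hSP.sPath_mul_P_pathEnd w (l ++ [f])]
    rw [star_mul, (hSP.isStarProjection_P _).isSelfAdjoint.star_eq]
    rfl
  · exact .inl (by rw [hSP.sPath_mul_S_of_ne hf, star_zero])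

lemma star_S_mul_mem (hSP : IsTCKFamily r s P S) (f : Ed) {T : H →L[ℂ] H}
    (hT : T ∈ insert 0 (pathMonomials r s P S)) :
    star (S f) * T ∈ insert 0 (pathMonomials r s P S) := by
  rcases hT with rfl | ⟨v, lμ, w, lν, hμ, hν, rfl⟩
  · exact .inl (mul_zero _)
  cases lμ with
  | nil =>
    have hstar : star (S f) * P v = star (P v * S f) := by
      rw [star_mul, (hSP.isStarProjection_P v).isSelfAdjoint.star_eq]
    change star (S f) * (P v * _) ∈ _
    by_cases hv : v = s f
    · rw [← mul_assoc, hstar, hv, hSP.P_source_mul_S]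
      exact hSP.star_S_mul_star_sPath_mem f hν
    · exact .inl (by rw [← mul_assoc, hstar, hSP.P_mul_eq_zero_of_ne (hSP.P_source_mul_S f) hv,
        star_zero, zero_mul])
  | cons e t =>
    obtain ⟨-, ht⟩ := isPathFrom_cons_iff.mp hμ
    rw [hSP.sPath_cons, mul_assoc, ← mul_assoc]
    by_cases hfe : f = e
    · subst hfe
      rw [hSP.star_S_mul_S, ← mul_assoc, hSP.P_mul_sPath ht]
      exact .inr ⟨r f, t, w, lν, ht, hν, rfl⟩
    · exact .inl (by rw [hSP.star_S_mul_S_of_ne hfe, zero_mul])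

lemma sPath_mul_mem (hSP : IsTCKFamily r s P S) (w : V) (l : List Ed) {T : H →L[ℂ] H}
    (hT : T ∈ insert 0 (pathMonomials r s P S)) :
    sPath P S w l * T ∈ insert 0 (pathMonomials r s P S) := by
  induction l generalizing w with
  | nil => exact hSP.P_mul_mem w hT
  | cons e t ih =>
    rw [hSP.sPath_cons, mul_assoc]
    exact hSP.S_mul_mem e (ih _)

lemma star_sPath_mul_mem (hSP : IsTCKFamily r s P S) (w : V) (l : List Ed) {T : H →L[ℂ] H}
    (hT : T ∈ insert 0 (pathMonomials r s P S)) :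
    star (sPath P S w l) * T ∈ insert 0 (pathMonomials r s P S) := by
  induction l generalizing w T with
  | nil =>
    rw [sPath, (hSP.isStarProjection_P w).isSelfAdjoint.star_eq]
    exact hSP.P_mul_mem w hT
  | cons e t ih =>
    rw [hSP.sPath_cons, star_mul, mul_assoc]
    exact ih _ (hSP.star_S_mul_mem e hT)

lemma mul_mem (hSP : IsTCKFamily r s P S) {T₁ T₂ : H →L[ℂ] H}
    (h₁ : T₁ ∈ insert 0 (pathMonomials r s P S))
    (h₂ : T₂ ∈ insert 0 (pathMonomials r s P S)) :
    T₁ * T₂ ∈ insert 0 (pathMonomials r s P S) := by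
  rcases h₁ with rfl | ⟨v, lμ, w, lν, -, -, rfl⟩
  · exact .inl (zero_mul _)
  rw [mul_assoc]
  exact hSP.sPath_mul_mem v lμ (hSP.star_sPath_mul_mem w lν h₂)

lemma S_mem_pathMonomials (hSP : IsTCKFamily r s P S) (f : Ed) :
    S f ∈ pathMonomials r s P S := by
  refine ⟨s f, [f], r f, [], isPathFrom_cons_iff.mpr ⟨rfl, isPathFrom_nil _⟩,
    isPathFrom_nil _, ?_⟩
  rw [hSP.sPath_cons, sPath, (hSP.isStarProjection_P _).isSelfAdjoint.star_eq, mul_assoc,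
    (hSP.isStarProjection_P _).isIdempotentElem.eq, hSP.S_mul_P_range]

lemma P_mem_pathMonomials (hSP : IsTCKFamily r s P S) (v : V) :
    P v ∈ pathMonomials r s P S :=
  ⟨v, [], v, [], isPathFrom_nil _, isPathFrom_nil _, by
    rw [sPath, (hSP.isStarProjection_P v).isSelfAdjoint.star_eq,
      (hSP.isStarProjection_P v).isIdempotentElem.eq]⟩

lemma sPath_mem_adjoin (hSP : IsTCKFamily r s P S) (v : V) (l : List Ed) :
    sPath P S v l ∈ NonUnitalStarAlgebra.adjoin ℂ (Set.range S ∪ Set.range P) := by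
  induction l generalizing v with
  | nil => exact NonUnitalStarAlgebra.subset_adjoin ℂ _ (.inr ⟨v, rfl⟩)
  | cons e t ih =>
    rw [hSP.sPath_cons]
    exact MulMemClass.mul_mem (NonUnitalStarAlgebra.subset_adjoin ℂ _ (.inl ⟨e, rfl⟩)) (ih _)

lemma pathMonomials_subset_adjoin (hSP : IsTCKFamily r s P S) :
    pathMonomials r s P S ⊆ NonUnitalStarAlgebra.adjoin ℂ (Set.range S ∪ Set.range P) := by
  rintro _ ⟨v, lμ, w, lν, -, -, rfl⟩
  exact MulMemClass.mul_mem (hSP.sPath_mem_adjoin v lμ) (star_mem (hSP.sPath_mem_adjoin w lν))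

end IsTCKFamily

/-- For a Toeplitz–Cuntz–Krieger `E`-family `{S_f, P_v}` on a Hilbert space `H`, the
smallest norm-closed *-subalgebra `C*(S, P)` of `B(H)` containing all the `S_f` and `P_v`
(i.e. the closure of the non-unital star subalgebra they generate) equals the closed linear
span of `{S_μ S_ν* : μ, ν paths in E (including trivial paths)}`. -/
theorem cstar_SP_eq_closed_span_monomials
    {V Ed : Type*} {H : Type*} [NormedAddCommGroup H] [InnerProductSpace ℂ H]
    [CompleteSpace H] {r s : Ed → V} {P : V → (H →L[ℂ] H)} {S : Ed → (H →L[ℂ] H)}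
    (hTCK : IsTCKFamily r s P S) :
    closure ((NonUnitalStarAlgebra.adjoin ℂ (Set.range S ∪ Set.range P) :
        NonUnitalStarSubalgebra ℂ (H →L[ℂ] H)) : Set (H →L[ℂ] H)) =
      closure ((Submodule.span ℂ
        {T : H →L[ℂ] H | ∃ (v : V) (lμ : List Ed) (w : V) (lν : List Ed),
          IsPathFrom r s v lμ ∧ IsPathFrom r s w lν ∧
          T = sPath P S v lμ * star (sPath P S w lν)} :
        Submodule ℂ (H →L[ℂ] H)) : Set (H →L[ℂ] H)) := by
  have hgen : Set.range S ∪ Set.range P ⊆ Submodule.span ℂ (pathMonomials r s P S) := by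
    rintro _ (⟨f, rfl⟩ | ⟨v, rfl⟩)
    exacts [Submodule.subset_span (hTCK.S_mem_pathMonomials f),
      Submodule.subset_span (hTCK.P_mem_pathMonomials v)]
  have hmul : ∀ x ∈ pathMonomials r s P S, ∀ y ∈ pathMonomials r s P S,
      x * y ∈ Submodule.span ℂ (pathMonomials r s P S) := fun x hx y hy =>
    (hTCK.mul_mem (.inr hx) (.inr hy)).elim (fun h => h ▸ zero_mem _) (Submodule.subset_span ·)
  exact congrArg closure <| NonUnitalStarAlgebra.coe_adjoin_eq_span_of_mul_mem_of_star_mem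
    hgen hTCK.pathMonomials_subset_adjoin hmul
    fun x hx => Submodule.subset_span (star_mem_pathMonomials hx)
end

section
/- Let {S_f, P_v} be a Toeplitz–Cuntz–Krieger E-family on a Hilbert space H, and let v, w be vertices such that w ∉ H(v) (there is no path from v to w). Suppose that for every finite set F of edges with source w one has Σ_{f ∈ F} S_f S_f* ≠ P_w. Then for every element b of the closed linear span of {S_μ S_τ* : μ, τ paths with r(μ) = r(τ) ∈ H(v)}, one has ‖P_w − b‖ ≥ 1. -/
section CStar
variable {A : Type*} [NormedRing A] [StarRing A] [CStarRing A] [PartialOrder A]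
  [StarOrderedRing A]

lemma aux_proj_absorb {p q : A} (hp : IsSelfAdjoint p) (hpi : IsIdempotentElem p)
    (hq : IsSelfAdjoint q) (hqi : IsIdempotentElem q) (hle : q ≤ p) : p * q = q := by
  have hp1 : p ≤ 1 := by
    rw [← sub_nonneg]
    have h1 : star (1 - p) * (1 - p) = 1 - p := by
      rw [star_sub, star_one, hp.star_eq, mul_sub, sub_mul, sub_mul, hpi.eq]
      simp
    calc (0 : A) ≤ star (1 - p) * (1 - p) := star_mul_self_nonneg _
    _ = 1 - p := h1
  have hqpq : q * p * q = q := by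
    apply le_antisymm
    · calc q * p * q = star q * p * q := by rw [hq.star_eq]
      _ ≤ star q * 1 * q := star_left_conjugate_le_conjugate hp1 q
      _ = q := by rw [mul_one, hq.star_eq, hqi.eq]
    · calc q = star q * q * q := by rw [hq.star_eq, hqi.eq, hqi.eq]
      _ ≤ star q * p * q := star_left_conjugate_le_conjugate hle q
      _ = q * p * q := by rw [hq.star_eq]
  have key : star (q - p * q) * (q - p * q) = 0 := by
    rw [star_sub, star_mul, hp.star_eq, hq.star_eq]
    rw [sub_mul, mul_sub, mul_sub, hqi.eq]
    have e1 : q * p * (p * q) = q * p * q := by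
      rw [mul_assoc q p (p * q), ← mul_assoc p p q, hpi.eq, ← mul_assoc]
    rw [← mul_assoc q p q] at *
    rw [e1, hqpq]
    simp
  have := (CStarRing.star_mul_self_eq_zero_iff _).mp key
  rw [sub_eq_zero] at this
  exact this.symm

omit [PartialOrder A] [StarOrderedRing A] in
lemma aux_norm_proj {p : A} (hp : IsSelfAdjoint p) (hpi : IsIdempotentElem p)
    (h0 : p ≠ 0) : ‖p‖ = 1 := by
  have h := CStarRing.norm_star_mul_self (x := p)
  rw [hp.star_eq, hpi.eq] at h
  have hn : ‖p‖ ≠ 0 := norm_ne_zero_iff.mpr h0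
  exact mul_left_cancel₀ hn (by rw [mul_one]; exact h.symm)

omit [PartialOrder A] [StarOrderedRing A] in
lemma aux_pisom {a : A} (h : IsIdempotentElem (star a * a)) : a * (star a * a) = a := by
  set t := star a * a with ht
  have key : star (a * t - a) * (a * t - a) = 0 := by
    have hts : star t = t := by rw [ht, star_mul, star_star]
    rw [star_sub, star_mul, hts]
    rw [sub_mul, mul_sub, mul_sub]
    have e1 : t * star a * (a * t) = t * (t * t) := by
      rw [mul_assoc t (star a) (a * t), ← mul_assoc (star a) a t, ← ht]
    have e2 : t * star a * a = t * t := by rw [mul_assoc, ← ht]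
    have e3 : star a * (a * t) = t * t := by rw [← mul_assoc, ← ht]
    rw [e1, e2, e3, ← ht]
    simp [h.eq]
  have := (CStarRing.star_mul_self_eq_zero_iff _).mp key
  rwa [sub_eq_zero] at this

end CStar

/-- Let `{S_f, P_v}` be a Toeplitz–Cuntz–Krieger `E`-family, and `v, w` vertices with no
path from `v` to `w`.  If `∑_{f ∈ F} S_f S_f* ≠ P_w` for every finite set `F` of edges with
source `w`, then `‖P_w − b‖ ≥ 1` for every `b` in the closed linear span of
`{S_μ S_τ* : μ, τ paths with r(μ) = r(τ) ∈ H(v)}`, where `H(v)` is the set of vertices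
reachable from `v` by a (possibly trivial) path. -/
theorem norm_Pw_sub_ge_one
    {V Ed : Type*} {H : Type*} [NormedAddCommGroup H] [InnerProductSpace ℂ H]
    [CompleteSpace H]
    {r s : Ed → V} {P : V → (H →L[ℂ] H)} {S : Ed → (H →L[ℂ] H)}
    (hTCK : IsTCKFamily r s P S)
    (v w : V)
    (hw : ¬ ∃ l : List Ed, IsPathFrom r s v l ∧ pathEnd r v l = w)
    (hstrict : ∀ F : Finset Ed, (∀ f ∈ F, s f = w) →
      ∑ f ∈ F, S f * star (S f) ≠ P w) :
    ∀ b ∈ closure ((Submodule.span ℂ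
        {T : H →L[ℂ] H | ∃ (vμ : V) (lμ : List Ed) (vτ : V) (lτ : List Ed),
          IsPathFrom r s vμ lμ ∧ IsPathFrom r s vτ lτ ∧
          pathEnd r vμ lμ = pathEnd r vτ lτ ∧
          (∃ l : List Ed, IsPathFrom r s v l ∧ pathEnd r v l = pathEnd r vμ lμ) ∧
          T = sPath P S vμ lμ * star (sPath P S vτ lτ)} :
        Submodule ℂ (H →L[ℂ] H)) : Set (H →L[ℂ] H)),
      1 ≤ ‖P w - b‖ := by
  classical
  obtain ⟨hPsa, hPidem, hPorth, hSS, hOrth, hSum⟩ := hTCK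
  -- basic consequences
  have hSP : ∀ f, S f * P (r f) = S f := by
    intro f
    have := aux_pisom (a := S f) (by rw [hSS f]; exact hPidem (r f))
    rwa [hSS f] at this
  have hSe : ∀ f, S f * star (S f) * S f = S f := by
    intro f; rw [mul_assoc, hSS, hSP]
  have hee : ∀ f, IsIdempotentElem (S f * star (S f)) := by
    intro f
    show S f * star (S f) * (S f * star (S f)) = _
    rw [← mul_assoc, hSe]
  have hesa : ∀ f, IsSelfAdjoint (S f * star (S f)) := by
    intro f; rw [IsSelfAdjoint, star_mul, star_star]
  have hele : ∀ f, S f * star (S f) ≤ P (s f) := by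
    intro f
    have := hSum (s f) {f} (by simp)
    simpa using this
  have hPS : ∀ f, P (s f) * S f = S f := by
    intro f
    have habs : P (s f) * (S f * star (S f)) = S f * star (S f) :=
      aux_proj_absorb (hPsa (s f)) (hPidem (s f)) (hesa f) (hee f) (hele f)
    calc P (s f) * S f = P (s f) * (S f * star (S f) * S f) := by rw [hSe]
    _ = P (s f) * (S f * star (S f)) * S f := by rw [← mul_assoc]
    _ = S f * star (S f) * S f := by rw [habs]
    _ = S f := hSe f
  have hPuS : ∀ (f : Ed) (u : V), u ≠ s f → P u * S f = 0 := by
    intro f u h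
    rw [← hPS f, ← mul_assoc, hPorth u (s f) h, zero_mul]
  have hSPu : ∀ (f : Ed) (u : V), u ≠ s f → star (S f) * P u = 0 := by
    intro f u h
    have := congrArg star (hPuS f u h)
    rwa [star_mul, (hPsa u).star_eq, star_zero] at this
  have hOrth' : ∀ e f, e ≠ f → S e * star (S e) * S f = 0 := by
    intro e f h
    calc S e * star (S e) * S f = S e * star (S e) * (S f * star (S f) * S f) := by rw [hSe]
    _ = (S e * star (S e)) * (S f * star (S f)) * S f := by rw [← mul_assoc]
    _ = 0 := by rw [hOrth e f h, zero_mul]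
  -- facts about q F := ∑ f ∈ F, S f Sf*
  have hqS : ∀ (F : Finset Ed) (f : Ed), f ∈ F →
      (∑ e ∈ F, S e * star (S e)) * S f = S f := by
    intro F f hf
    rw [Finset.sum_mul]
    rw [Finset.sum_eq_single f (fun e _ hne => hOrth' e f hne) (fun h => absurd hf h)]
    exact hSe f
  have hqSP : ∀ (F : Finset Ed), (∀ f ∈ F, s f = w) → ∀ f, s f ≠ w →
      (∑ e ∈ F, S e * star (S e)) * S f = 0 := by
    intro F hF f hsf
    rw [Finset.sum_mul]
    apply Finset.sum_eq_zero
    intro e he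
    exact hOrth' e f (fun h => hsf (h ▸ hF e he))
  have hqPu : ∀ (F : Finset Ed), (∀ f ∈ F, s f = w) → ∀ u, u ≠ w →
      (∑ e ∈ F, S e * star (S e)) * P u = 0 := by
    intro F hF u hu
    rw [Finset.sum_mul]
    apply Finset.sum_eq_zero
    intro e he
    rw [mul_assoc, hSPu e u (by rw [hF e he]; exact hu), mul_zero]
  have hq_sa : ∀ F : Finset Ed, IsSelfAdjoint (∑ e ∈ F, S e * star (S e)) := by
    intro F
    rw [IsSelfAdjoint, star_sum]
    exact Finset.sum_congr rfl fun f _ => (hesa f).star_eq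
  have hq_idem : ∀ F : Finset Ed, IsIdempotentElem (∑ e ∈ F, S e * star (S e)) := by
    intro F
    show _ * _ = _
    rw [Finset.sum_mul]
    apply Finset.sum_congr rfl
    intro e he
    rw [Finset.mul_sum]
    rw [Finset.sum_eq_single e (fun f _ hne => hOrth e f (Ne.symm hne)) (fun h => absurd he h)]
    exact hee e
  -- facts about Q F := P w - q F
  have hPwq : ∀ F : Finset Ed, (∀ f ∈ F, s f = w) →
      P w * (∑ e ∈ F, S e * star (S e)) = ∑ e ∈ F, S e * star (S e) := by
    intro F hF
    exact aux_proj_absorb (hPsa w) (hPidem w) (hq_sa F) (hq_idem F) (hSum w F hF)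
  have hqPw : ∀ F : Finset Ed, (∀ f ∈ F, s f = w) →
      (∑ e ∈ F, S e * star (S e)) * P w = ∑ e ∈ F, S e * star (S e) := by
    intro F hF
    have := congrArg star (hPwq F hF)
    rwa [star_mul, (hPsa w).star_eq, (hq_sa F).star_eq] at this
  have hQsa : ∀ F : Finset Ed, IsSelfAdjoint (P w - ∑ e ∈ F, S e * star (S e)) :=
    fun F => (hPsa w).sub (hq_sa F)
  have hQidem : ∀ F : Finset Ed, (∀ f ∈ F, s f = w) →
      IsIdempotentElem (P w - ∑ e ∈ F, S e * star (S e)) := by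
    intro F hF
    show _ * _ = _
    rw [sub_mul, mul_sub, mul_sub, (hPidem w).eq, hPwq F hF, hqPw F hF, (hq_idem F).eq]
    simp
  have hQne : ∀ F : Finset Ed, (∀ f ∈ F, s f = w) →
      P w - (∑ e ∈ F, S e * star (S e)) ≠ 0 := by
    intro F hF h
    exact hstrict F hF (sub_eq_zero.mp h).symm
  have hQPw : ∀ F : Finset Ed, (∀ f ∈ F, s f = w) →
      (P w - ∑ e ∈ F, S e * star (S e)) * P w = P w - ∑ e ∈ F, S e * star (S e) := by
    intro F hF
    rw [sub_mul, (hPidem w).eq, hqPw F hF]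
  -- killing the generators
  have hkill : ∀ F : Finset Ed, (∀ f ∈ F, s f = w) → ∀ (vm : V) (lm : List Ed),
      (∃ l : List Ed, IsPathFrom r s v l ∧ pathEnd r v l = pathEnd r vm lm) →
      (∀ e ∈ lm.head?, s e = w → e ∈ F) →
      (P w - ∑ e ∈ F, S e * star (S e)) * sPath P S vm lm = 0 := by
    intro F hF vm lm hreach hhead
    match lm with
    | [] =>
      have hvm : vm ≠ w := by
        intro h
        exact hw (by simpa [pathEnd, h] using hreach)
      show _ * P vm = 0
      rw [sub_mul, hPorth w vm (Ne.symm hvm), hqPu F hF vm hvm, sub_zero]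
    | f :: rest =>
      show _ * (List.map S (f :: rest)).prod = 0
      rw [List.map_cons, List.prod_cons, ← mul_assoc]
      have hf : (P w - ∑ e ∈ F, S e * star (S e)) * S f = 0 := by
        by_cases hsf : s f = w
        · have hfF : f ∈ F := hhead f (by simp) hsf
          rw [sub_mul, hqS F f hfF, ← hsf, hPS f, sub_self]
        · rw [sub_mul, hqSP F hF f hsf, hPuS f w (fun h => hsf h.symm), sub_zero]
      rw [hf, zero_mul]
  -- span property
  intro b hb
  have hsub : (↑(Submodule.span ℂ
      {T : H →L[ℂ] H | ∃ (vμ : V) (lμ : List Ed) (vτ : V) (lτ : List Ed),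
        IsPathFrom r s vμ lμ ∧ IsPathFrom r s vτ lτ ∧
        pathEnd r vμ lμ = pathEnd r vτ lτ ∧
        (∃ l : List Ed, IsPathFrom r s v l ∧ pathEnd r v l = pathEnd r vμ lμ) ∧
        T = sPath P S vμ lμ * star (sPath P S vτ lτ)}) : Set (H →L[ℂ] H)) ⊆
      {x : H →L[ℂ] H | 1 ≤ ‖P w - x‖} := by
    intro x hx
    have hx' : ∃ F₀ : Finset Ed, (∀ f ∈ F₀, s f = w) ∧ ∀ F : Finset Ed, F₀ ⊆ F →
        (∀ f ∈ F, s f = w) → (P w - ∑ e ∈ F, S e * star (S e)) * x = 0 := by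
      induction hx using Submodule.span_induction with
      | mem y hy =>
        obtain ⟨vμ, lμ, vτ, lτ, hμ, hτ, hend, hreach, rfl⟩ := hy
        match lμ with
        | [] =>
          refine ⟨∅, by simp, fun F _ hF => ?_⟩
          rw [← mul_assoc, hkill F hF vμ [] hreach (by simp), zero_mul]
        | f :: rest =>
          by_cases hsf : s f = w
          · refine ⟨{f}, by simp [hsf], fun F hFsub hF => ?_⟩
            rw [← mul_assoc, hkill F hF vμ (f :: rest) hreach ?_, zero_mul]
            intro e he _
            simp only [List.head?_cons, Option.mem_def, Option.some.injEq] at he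
            exact hFsub (by simp [he])
          · refine ⟨∅, by simp, fun F _ hF => ?_⟩
            rw [← mul_assoc, hkill F hF vμ (f :: rest) hreach ?_, zero_mul]
            intro e he hew
            simp only [List.head?_cons, Option.mem_def, Option.some.injEq] at he
            exact absurd (he ▸ hew) hsf
      | zero => exact ⟨∅, by simp, fun F _ _ => mul_zero _⟩
      | add y z _ _ ihy ihz =>
        obtain ⟨F₁, h₁, h₁'⟩ := ihy
        obtain ⟨F₂, h₂, h₂'⟩ := ihz
        refine ⟨F₁ ∪ F₂, ?_, fun F hFsub hF => ?_⟩
        · intro f hf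
          rcases Finset.mem_union.mp hf with h | h
          · exact h₁ f h
          · exact h₂ f h
        · rw [mul_add, h₁' F ((Finset.union_subset_iff.mp hFsub).1) hF,
            h₂' F ((Finset.union_subset_iff.mp hFsub).2) hF, add_zero]
      | smul a y _ ihy =>
        obtain ⟨F₁, h₁, h₁'⟩ := ihy
        exact ⟨F₁, h₁, fun F hFsub hF => by
          rw [mul_smul_comm, h₁' F hFsub hF, smul_zero]⟩
    obtain ⟨F₀, hF₀, hann⟩ := hx'
    have h0 : (P w - ∑ e ∈ F₀, S e * star (S e)) * (P w - x)
        = P w - ∑ e ∈ F₀, S e * star (S e) := by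
      rw [mul_sub, hQPw F₀ hF₀, hann F₀ (subset_refl F₀) hF₀, sub_zero]
    have hnorm : ‖P w - ∑ e ∈ F₀, S e * star (S e)‖ = 1 :=
      aux_norm_proj (hQsa F₀) (hQidem F₀ hF₀) (hQne F₀ hF₀)
    calc (1 : ℝ) = ‖P w - ∑ e ∈ F₀, S e * star (S e)‖ := hnorm.symm
    _ = ‖(P w - ∑ e ∈ F₀, S e * star (S e)) * (P w - x)‖ := by rw [h0]
    _ ≤ ‖P w - ∑ e ∈ F₀, S e * star (S e)‖ * ‖P w - x‖ := norm_mul_le _ _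
    _ = ‖P w - x‖ := by rw [hnorm, one_mul]
  exact closure_minimal hsub
    (isClosed_le continuous_const ((continuous_const.sub continuous_id).norm)) hb
end

section
/- Let B be a unital C*-algebra and (Q_n)_{n≥0} a sequence of self-adjoint projections in B with Q_0 = 1 and Q_{n+1} ≤ Q_n for all n. Then there is a unital *-homomorphism π from C(ℕ∞, ℂ), the C*-algebra of continuous complex-valued functions on the one-point compactification ℕ∞ = ℕ ∪ {∞} of ℕ (equivalently, the algebra of convergent complex sequences with the supremum norm), to B such that for every n ≥ 0, π maps the indicator function of {k ∈ ℕ : k ≥ n} ∪ {∞} to Q_n. -/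
/-!
The differences `P n = Q n - Q (n + 1)` are pairwise orthogonal projections. For a finite set `s`,
the `P n` with `n ∈ s` together with `1 - ∑ n ∈ s, P n` form a partition of unity, hence give a
*-homomorphism `π_s f = f ∞ + ∑ n ∈ s, (f n - f ∞) P n` on `C(ℕ∞, ℂ)`. Being a *-homomorphism of
C*-algebras, it is contractive, so `‖∑ n ∈ s, c n P n‖ ≤ sup |c n|`; as `f n → f ∞`, the series
`π f = f ∞ + ∑ (f n - f ∞) P n` converges, and `π`, the pointwise limit of the `π_s`, is again a
*-homomorphism. On the indicator of `[n, ∞]` the series telescopes to `1 - (Q 0 - Q n) = Q n`.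
-/

open OnePoint in
/-- The clopen subset `{k ∈ ℕ : k ≥ n} ∪ {∞}` of the one-point compactification `ℕ∞`. -/
def geSet (n : ℕ) : Set (OnePoint ℕ) := insert ∞ ((↑) '' Set.Ici n)

lemma geSet_eq_compl (n : ℕ) : geSet n = ((((↑) : ℕ → OnePoint ℕ) '' Set.Iio n))ᶜ := by
  ext x
  cases x with
  | infty =>
    simp [geSet, OnePoint.infty_notMem_image_coe]
  | coe k =>
    simp only [geSet, Set.mem_insert_iff, Set.mem_image, Set.mem_Ici, Set.mem_Iio,
      Set.mem_compl_iff, OnePoint.coe_ne_infty, OnePoint.coe_eq_coe, false_or]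
    constructor
    · rintro ⟨m, hm, rfl⟩
      rintro ⟨j, hj, hjk⟩
      omega
    · intro h
      refine ⟨k, ?_, rfl⟩
      by_contra hk
      exact h ⟨k, by omega, rfl⟩

lemma isClopen_geSet (n : ℕ) : IsClopen (geSet n) := by
  rw [geSet_eq_compl]
  constructor
  · exact (OnePoint.isOpen_image_coe.2 (isOpen_discrete _)).isClosed_compl
  · exact OnePoint.isOpen_compl_image_coe.2
      ⟨isClosed_discrete _, (Set.finite_Iio n).isCompact⟩

/-- The indicator function of `{k ∈ ℕ : k ≥ n} ∪ {∞}` as a continuous function on the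
one-point compactification `ℕ∞ = ℕ ∪ {∞}`. -/
noncomputable def chiGe (n : ℕ) : C(OnePoint ℕ, ℂ) :=
  ⟨(geSet n).indicator 1,
    continuous_indicator (by simp [isClopen_geSet n]) continuous_const.continuousOn⟩

open Filter Topology OnePoint

section PiStarAlgHom

variable {R A ι : Type*} [CommSemiring R] [StarRing R] [Semiring A] [StarRing A] [Algebra R A]
  [StarModule R A] [Fintype ι] {e : ι → A}

noncomputable def CompleteOrthogonalIdempotents.piStarAlgHom
    (he : CompleteOrthogonalIdempotents e) (hsa : ∀ i, IsSelfAdjoint (e i)) :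
    (ι → R) →⋆ₐ[R] A :=
  { AlgHom.ofLinearMap (Fintype.linearCombination R e)
      (by simp [Fintype.linearCombination_apply, he.complete])
      (fun c d => by
        classical
        simp [Fintype.linearCombination_apply, Finset.sum_mul_sum, he.mul_eq, smul_smul,
          mul_comm]) with
    map_star' c := by simp [Fintype.linearCombination_apply, star_sum, (hsa _).star_eq] }

theorem CompleteOrthogonalIdempotents.piStarAlgHom_apply
    (he : CompleteOrthogonalIdempotents e) (hsa : ∀ i, IsSelfAdjoint (e i)) (c : ι → R) :
    he.piStarAlgHom hsa c = ∑ i, c i • e i :=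
  rfl

end PiStarAlgHom

noncomputable def StarAlgHom.ofTendsto {R A B ι : Type*} [CommSemiring R] [Semiring A]
    [Algebra R A] [Star A] [Semiring B] [Algebra R B] [Star B] [TopologicalSpace B] [T2Space B]
    [IsTopologicalSemiring B] [ContinuousStar B] {l : Filter ι} [l.NeBot]
    (φ : ι → A →⋆ₐ[R] B) (ψ : A → B) (h : ∀ a, Tendsto (fun i => φ i a) l (𝓝 (ψ a))) :
    A →⋆ₐ[R] B where
  toFun := ψ
  map_one' := tendsto_nhds_unique (h 1) (by simp)
  map_mul' a b := tendsto_nhds_unique (h (a * b)) (by simpa using (h a).mul (h b))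
  map_zero' := tendsto_nhds_unique (h 0) (by simp)
  map_add' a b := tendsto_nhds_unique (h (a + b)) (by simpa using (h a).add (h b))
  commutes' r := tendsto_nhds_unique (h _) <| by
    simp only [AlgHomClass.commutes]
    exact tendsto_const_nhds
  map_star' a := tendsto_nhds_unique (h (star a)) <|
    (h a).star.congr fun i => (map_star (φ i) a).symm

def ContinuousMap.evalPiStarAlgHom {Y ι 𝕜 : Type*} [TopologicalSpace Y] [CommSemiring 𝕜]
    [TopologicalSpace 𝕜] [IsTopologicalSemiring 𝕜] [StarRing 𝕜] [ContinuousStar 𝕜] (p : ι → Y) :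
    C(Y, 𝕜) →⋆ₐ[𝕜] (ι → 𝕜) where
  toFun f i := f (p i)
  map_one' := rfl
  map_mul' _ _ := rfl
  map_zero' := rfl
  map_add' _ _ := rfl
  commutes' _ := rfl
  map_star' _ := rfl

theorem ContinuousMap.tendsto_sub_apply_infty {X G : Type*} [TopologicalSpace X]
    [DiscreteTopology X] [AddGroup G] [TopologicalSpace G] [ContinuousSub G]
    (f : C(OnePoint X, G)) : Tendsto (fun x : X => f x - f ∞) cofinite (𝓝 0) := by
  have h := (f.continuous.tendsto ∞).comp (tendsto_coe_infty (X := X))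
  rw [coclosedCompact_eq_cocompact, cocompact_eq_cofinite] at h
  simpa using h.sub_const (f ∞)

namespace OrthogonalIdempotents

variable {A X : Type*} [CStarAlgebra A] {e : X → A}
  (he : OrthogonalIdempotents e) (hsa : ∀ x, IsSelfAdjoint (e x))

include he hsa

/-- The index `none` carries the complementary projection `1 - ∑ x ∈ s, e x`. -/
noncomputable def finsetStarAlgHom (s : Finset X) : (Option s → ℂ) →⋆ₐ[ℂ] A :=
  (CompleteOrthogonalIdempotents.option (he.embedding (.subtype (· ∈ s)))).piStarAlgHom <| by
    rintro (_ | x)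
    · exact .sub (.one _) (isSelfAdjoint_sum _ fun x _ => hsa x)
    · exact hsa x

theorem finsetStarAlgHom_apply (s : Finset X) (c : Option s → ℂ) :
    he.finsetStarAlgHom hsa s c = c none • 1 + ∑ x : s, (c (.some x) - c none) • e x := by
  simp [finsetStarAlgHom, CompleteOrthogonalIdempotents.piStarAlgHom_apply, Fintype.sum_option,
    smul_sub, sub_smul, Finset.smul_sum]
  abel

theorem norm_sum_smul_le (s : Finset X) (c : X → ℂ) {C : ℝ} (hC : 0 ≤ C)
    (hc : ∀ x ∈ s, ‖c x‖ ≤ C) : ‖∑ x ∈ s, c x • e x‖ ≤ C := by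
  have hsum : ∑ x ∈ s, c x • e x = he.finsetStarAlgHom hsa s (Option.elim · 0 (c ·)) := by
    simp [finsetStarAlgHom_apply, Finset.sum_attach s fun x => c x • e x]
  rw [hsum]
  refine (NonUnitalStarAlgHom.norm_apply_le _ _).trans ((pi_norm_le_iff_of_nonneg hC).2 ?_)
  rintro (_ | x)
  · simpa using hC
  · simpa using hc x x.2

theorem summable_smul_of_tendsto_zero {c : X → ℂ} (hc : Tendsto c cofinite (𝓝 0)) :
    Summable fun x => c x • e x := by
  refine summable_iff_vanishing_norm.2 fun ε hε => ?_
  have hfin : {x | ¬ ‖c x‖ ≤ ε / 2}.Finite :=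
    eventually_cofinite.1 ((tendsto_zero_iff_norm_tendsto_zero.1 hc).eventually
      (ge_mem_nhds (half_pos hε)))
  refine ⟨hfin.toFinset, fun t ht => ?_⟩
  have hsmall : ∀ x ∈ t, ‖c x‖ ≤ ε / 2 := fun x hx => by
    simpa using Finset.disjoint_left.1 ht hx
  exact (he.norm_sum_smul_le hsa t c (by positivity) hsmall).trans_lt (half_lt_self hε)

variable [TopologicalSpace X]

noncomputable def finsetOnePointStarAlgHom (s : Finset X) : C(OnePoint X, ℂ) →⋆ₐ[ℂ] A :=
  (he.finsetStarAlgHom hsa s).comp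
    (ContinuousMap.evalPiStarAlgHom fun o : Option s => o.elim ∞ fun x => (x : X))

theorem finsetOnePointStarAlgHom_apply (s : Finset X) (f : C(OnePoint X, ℂ)) :
    he.finsetOnePointStarAlgHom hsa s f = f ∞ • 1 + ∑ x ∈ s, (f x - f ∞) • e x := by
  rw [finsetOnePointStarAlgHom, StarAlgHom.comp_apply, finsetStarAlgHom_apply,
    ← Finset.sum_attach s]
  rfl

variable [DiscreteTopology X]

noncomputable def onePointStarAlgHom : C(OnePoint X, ℂ) →⋆ₐ[ℂ] A :=
  .ofTendsto (he.finsetOnePointStarAlgHom hsa) (fun f => f ∞ • 1 + ∑' x : X, (f x - f ∞) • e x)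
    fun f => by
      simp only [finsetOnePointStarAlgHom_apply]
      exact (he.summable_smul_of_tendsto_zero hsa f.tendsto_sub_apply_infty).hasSum.const_add _

theorem onePointStarAlgHom_apply (f : C(OnePoint X, ℂ)) :
    he.onePointStarAlgHom hsa f = f ∞ • 1 + ∑' x : X, (f x - f ∞) • e x :=
  rfl

end OrthogonalIdempotents

section DecreasingProjections

variable {A : Type*} [CStarAlgebra A] [PartialOrder A] [StarOrderedRing A] {Q : ℕ → A}
  (hanti : Antitone Q) (hQ : ∀ n, IsStarProjection (Q n))

include hanti hQ

theorem Antitone.mul_eq_max_of_isStarProjection (m n : ℕ) : Q m * Q n = Q (max m n) := by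
  rcases le_total m n with h | h
  · rw [max_eq_right h, ← (hQ n).le_iff_mul_eq_right (hQ m)]
    exact hanti h
  · rw [max_eq_left h, ← (hQ m).le_iff_mul_eq_left (hQ n)]
    exact hanti h

theorem Antitone.orthogonalIdempotents_sub_succ :
    OrthogonalIdempotents fun n => Q n - Q (n + 1) where
  idem n := by
    simp only [IsIdempotentElem, sub_mul, mul_sub, hanti.mul_eq_max_of_isStarProjection hQ,
      max_self, Nat.le_succ, max_eq_right, max_eq_left]
    abel
  ortho m n hmn := by
    simp only [sub_mul, mul_sub, hanti.mul_eq_max_of_isStarProjection hQ]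
    rcases Nat.lt_or_gt_of_ne hmn with h | h
    · rw [max_eq_right h.le, max_eq_right (by omega : m ≤ n + 1), max_eq_right h,
        max_eq_right (by omega : m + 1 ≤ n + 1)]
      abel
    · rw [max_eq_left h.le, max_eq_left (by omega : n + 1 ≤ m), max_eq_left (by omega : n ≤ m + 1),
        max_eq_left (by omega : n + 1 ≤ m + 1)]
      abel

end DecreasingProjections

theorem chiGe_infty (n : ℕ) : chiGe n ∞ = 1 :=
  Set.indicator_of_mem (Set.mem_insert _ _) _

theorem chiGe_coe (n k : ℕ) : chiGe n k = if n ≤ k then 1 else 0 := by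
  classical
  simp only [chiGe, ContinuousMap.coe_mk, Set.indicator_apply, geSet]
  simp

/-- Let `B` be a unital C*-algebra and `(Q_n)` a decreasing sequence of self-adjoint
projections in `B` with `Q_0 = 1`.  Then there is a unital *-homomorphism
`π : C(ℕ∞, ℂ) → B` sending, for every `n`, the indicator function of
`{k ∈ ℕ : k ≥ n} ∪ {∞}` to `Q_n`. -/
theorem exists_starAlgHom_of_decreasing_projections
    {B : Type*} [CStarAlgebra B] [PartialOrder B] [StarOrderedRing B]
    (Q : ℕ → B)
    (hsa : ∀ n, IsSelfAdjoint (Q n)) (hidem : ∀ n, IsIdempotentElem (Q n))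
    (hQ0 : Q 0 = 1) (hdec : ∀ n, Q (n + 1) ≤ Q n) :
    ∃ π : C(OnePoint ℕ, ℂ) →⋆ₐ[ℂ] B, ∀ n : ℕ, π (chiGe n) = Q n := by
  have hanti : Antitone Q := antitone_nat_of_succ_le hdec
  have he := hanti.orthogonalIdempotents_sub_succ fun n => ⟨hidem n, hsa n⟩
  refine ⟨he.onePointStarAlgHom fun n => (hsa n).sub (hsa (n + 1)), fun n => ?_⟩
  have hterm (k : ℕ) : (chiGe n k - 1) • (Q k - Q (k + 1)) =
      if k < n then Q (k + 1) - Q k else 0 := by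
    rw [chiGe_coe]
    split_ifs <;> first | omega | simp
  rw [OrthogonalIdempotents.onePointStarAlgHom_apply, chiGe_infty, one_smul, tsum_congr hterm,
    tsum_eq_sum (s := Finset.range n) fun k hk => if_neg (by simpa using hk),
    Finset.sum_ite_of_true (by simp), Finset.sum_range_sub, hQ0]
  abel
end
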